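/- arXiv:2308.06141 — 4 statements merged into one kernel-verified Lean document; each statement's English description precedes it below -/
import Mathlib

section
/- Let k, p be natural numbers with p ≥ 1, let M₁ be a real k×p matrix of full column rank (rank M₁ = p), let M₂ be a real p×p matrix, and let L be the (k+p)×(k+p) block matrix L = fromBlocks 0 M₁ 0 M₂. Then for every natural number l ≥ 1: M₂ is nilpotent of index l (i.e., M₂^l = 0 and M₂^(l-1) ≠ 0) if and only if L is nilpotent of index l+1 (i.e., L^(l+1) = 0 and L^l ≠ 0). -/
/-! Since `L ^ (n + 1) = fromBlocks 0 (M₁ * M₂ ^ n) 0 (M₂ ^ (n + 1))` and a matrix of full column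
rank is left cancellable, `L ^ (n + 1) = 0` holds exactly when `M₂ ^ n = 0`. -/

namespace Matrix

theorem eq_zero_of_mul_eq_zero_of_rank_eq_card {K l m n : Type*} [Field K] [Finite l] [Fintype m]
    [Fintype n] {A : Matrix l m K} (hA : A.rank = Fintype.card m) {B : Matrix m n K}
    (hAB : A * B = 0) : B = 0 := by
  have hB : B.rank = 0 := by
    have := rank_add_rank_le_card_of_mul_eq_zero hAB
    omega
  have hrange : LinearMap.range B.mulVecLin = ⊥ := Submodule.finrank_eq_zero.mp hB
  classical
  exact toLin'.map_eq_zero_iff.mp (LinearMap.range_eq_bot.mp hrange)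

section FromBlocksPow

variable {l m α : Type*} [Fintype l] [Fintype m] [DecidableEq l] [DecidableEq m] [Semiring α]

theorem fromBlocks_zero_zero_pow_succ (B : Matrix l m α) (D : Matrix m m α) (n : ℕ) :
    (fromBlocks 0 B 0 D : Matrix (l ⊕ m) (l ⊕ m) α) ^ (n + 1) =
      fromBlocks 0 (B * D ^ n) 0 (D ^ (n + 1)) := by
  induction n with
  | zero => simp
  | succ n ih =>
    rw [pow_succ, ih, fromBlocks_multiply]
    simp [Matrix.mul_assoc, ← pow_succ]

theorem fromBlocks_zero_zero_pow_succ_eq_zero_iff {B : Matrix l m α}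
    (hB : ∀ X : Matrix m m α, B * X = 0 → X = 0) (D : Matrix m m α) (n : ℕ) :
    (fromBlocks 0 B 0 D : Matrix (l ⊕ m) (l ⊕ m) α) ^ (n + 1) = 0 ↔ D ^ n = 0 := by
  rw [fromBlocks_zero_zero_pow_succ, ← fromBlocks_zero, fromBlocks_inj]
  constructor
  · rintro ⟨-, hBD, -, -⟩
    exact hB _ hBD
  · intro hD
    simp [hD, pow_succ]

end FromBlocksPow

end Matrix

open Matrix

theorem nilpotency_equivalence_general (k p : ℕ)
    (M₁ : Matrix (Fin k) (Fin p) ℝ) (hM₁ : M₁.rank = p)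
    (M₂ : Matrix (Fin p) (Fin p) ℝ)
    (L : Matrix (Fin k ⊕ Fin p) (Fin k ⊕ Fin p) ℝ)
    (hL : L = Matrix.fromBlocks 0 M₁ 0 M₂)
    (l : ℕ) (hl : 1 ≤ l) :
    (M₂ ^ l = 0 ∧ M₂ ^ (l - 1) ≠ 0) ↔ (L ^ (l + 1) = 0 ∧ L ^ l ≠ 0) := by
  obtain ⟨n, rfl⟩ : ∃ n, l = n + 1 := ⟨l - 1, by omega⟩
  have hM₁_cancel (X : Matrix (Fin p) (Fin p) ℝ) (hX : M₁ * X = 0) : X = 0 :=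
    eq_zero_of_mul_eq_zero_of_rank_eq_card (by rwa [Fintype.card_fin]) hX
  simp only [hL, ne_eq, fromBlocks_zero_zero_pow_succ_eq_zero_iff hM₁_cancel, Nat.add_sub_cancel]

/-- Nilpotency equivalence (Lemma 3.1 of the paper): for `M₁` of full column
rank and `L = fromBlocks 0 M₁ 0 M₂`, the matrix `M₂` is nilpotent of index `l`
if and only if `L` is nilpotent of index `l + 1`. -/
theorem nilpotency_equivalence (k p : ℕ) (hp : 1 ≤ p)
    (M₁ : Matrix (Fin k) (Fin p) ℝ) (hM₁ : M₁.rank = p)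
    (M₂ : Matrix (Fin p) (Fin p) ℝ)
    (L : Matrix (Fin k ⊕ Fin p) (Fin k ⊕ Fin p) ℝ)
    (hL : L = Matrix.fromBlocks 0 M₁ 0 M₂)
    (l : ℕ) (hl : 1 ≤ l) :
    (M₂ ^ l = 0 ∧ M₂ ^ (l - 1) ≠ 0) ↔ (L ^ (l + 1) = 0 ∧ L ^ l ≠ 0) :=
  nilpotency_equivalence_general k p M₁ hM₁ M₂ L hL l hl
end

section
/- Let n, p be natural numbers with p ≥ 1, and let N : ℝⁿ → (n×p real matrices), f : ℝⁿ → ℝᵖ and G : ℝⁿ × ℝ → ℝⁿ all be C¹. Define H : ℝⁿ × ℝ → ℝⁿ by H(z,ε) = z + N(z)·f(z) + ε·G(z,ε), and let z₀ ∈ ℝⁿ satisfy f(z₀) = 0. Then the following are equivalent: (i) det(I_p + Df(z₀)·N(z₀)) ≠ 0, where Df(z₀) is the p×n Jacobian matrix of f at z₀ (equivalently, all p nontrivial multipliers, i.e. the eigenvalues of I_p + Df(z₀)·N(z₀), are nonzero); (ii) there exist an open neighbourhood U of z₀ in ℝⁿ and ε₀ > 0 such that for every ε ∈ [0, ε₀),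 the map z ↦ H(z,ε) restricted to U is a C¹ diffeomorphism onto an open subset of ℝⁿ (it is injective on U, its image is open, and its inverse is C¹ on the image). -/
open scoped Topology

/-!
Along the critical manifold the product rule gives `D(N·f)(z₀) = N(z₀)·Df(z₀)`, so
`D_z H(z₀, 0) = I_n + N(z₀)·Df(z₀)`, whose determinant is `det (I_p + Df(z₀)·N(z₀))`.
If it is nonzero, the inverse function theorem for `(z, ε) ↦ (H(z, ε), ε)` at `(z₀, 0)` yields a
single neighbourhood of `z₀` on which every slice `H(·, ε)` with `ε` small is injective, open, and
has a `C¹` inverse. Conversely, a differentiable left inverse of `H(·, 0)` near `z₀` makes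
`D_z H(z₀, 0)` invertible.
-/

theorem ContinuousLinearMap.det_id_add_toLin'_comp {𝕜 m p : Type*} [NontriviallyNormedField 𝕜]
    [CompleteSpace 𝕜] [Fintype m] [DecidableEq m] [Fintype p] [DecidableEq p]
    (A : Matrix m p 𝕜) (B : (m → 𝕜) →L[𝕜] p → 𝕜) :
    (ContinuousLinearMap.id 𝕜 _ + (Matrix.toLin' A).toContinuousLinearMap.comp B).det =
      (1 + LinearMap.toMatrix' (B : (m → 𝕜) →ₗ[𝕜] p → 𝕜) * A).det := by
  have hB : (B : (m → 𝕜) →ₗ[𝕜] p → 𝕜) = Matrix.toLin' (LinearMap.toMatrix' B) :=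
    (Matrix.toLin'_toMatrix' _).symm
  change LinearMap.det (LinearMap.id + Matrix.toLin' A ∘ₗ (B : (m → 𝕜) →ₗ[𝕜] p → 𝕜)) = _
  rw [hB, ← Matrix.toLin'_one, ← Matrix.toLin'_mul, ← map_add, LinearMap.det_toLin',
    LinearMap.toMatrix'_toLin', Matrix.det_one_add_mul_comm]

theorem HasFDerivAt.mulVec_of_eq_zero {𝕜 E m p : Type*} [NontriviallyNormedField 𝕜]
    [CompleteSpace 𝕜] [NormedAddCommGroup E] [NormedSpace 𝕜 E] [Fintype m] [Fintype p]
    [DecidableEq p] {N : E → Matrix m p 𝕜} {f : E → p → 𝕜} {f' : E →L[𝕜] p → 𝕜} {z₀ : E}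
    (hN : ∀ i j, DifferentiableAt 𝕜 (fun z => N z i j) z₀) (hf : HasFDerivAt f f' z₀)
    (hz₀ : f z₀ = 0) :
    HasFDerivAt (fun z => (N z).mulVec (f z))
      ((Matrix.toLin' (N z₀)).toContinuousLinearMap.comp f') z₀ := by
  refine hasFDerivAt_pi'' fun i => ?_
  have hterm : ∀ j, HasFDerivAt (fun z => N z i j * f z j)
      (N z₀ i j • (ContinuousLinearMap.proj j).comp f') z₀ := fun j => by
    simpa [hz₀] using (hN i j).hasFDerivAt.fun_smul (hasFDerivAt_pi'.1 hf j)
  convert HasFDerivAt.sum (u := Finset.univ) fun j _ => hterm j using 1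
  · ext z; simp [Matrix.mulVec, dotProduct]
  · ext v; simp [Matrix.mulVec, dotProduct]

theorem ContDiff.mulVec {𝕜 E m p : Type*} [NontriviallyNormedField 𝕜] [NormedAddCommGroup E]
    [NormedSpace 𝕜 E] [Fintype m] [Fintype p] {N : E → Matrix m p 𝕜} {f : E → p → 𝕜}
    {n : WithTop ℕ∞} (hN : ∀ i j, ContDiff 𝕜 n fun z => N z i j) (hf : ContDiff 𝕜 n f) :
    ContDiff 𝕜 n fun z => (N z).mulVec (f z) :=
  contDiff_pi.2 fun i => by
    simpa [Matrix.mulVec, dotProduct] using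
      ContDiff.sum fun j _ => (hN i j).mul (contDiff_pi.1 hf j)

theorem HasFDerivAt.det_ne_zero_of_eventually_leftInverse {𝕜 E : Type*}
    [NontriviallyNormedField 𝕜] [NormedAddCommGroup E] [NormedSpace 𝕜 E] [FiniteDimensional 𝕜 E]
    {h g : E → E} {A : E →L[𝕜] E} {x : E} (hh : HasFDerivAt h A x)
    (hg : DifferentiableAt 𝕜 g (h x)) (hgh : ∀ᶠ z in 𝓝 x, g (h z) = z) : A.det ≠ 0 := by
  have hcomp : (fderiv 𝕜 g (h x)).comp A = .id 𝕜 E :=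
    (hg.hasFDerivAt.comp x hh).unique ((hasFDerivAt_id x).congr_of_eventuallyEq hgh)
  have hdet : (fderiv 𝕜 g (h x)).det * A.det = 1 := by
    rw [ContinuousLinearMap.det, ContinuousLinearMap.det, ← LinearMap.det_comp,
      ← ContinuousLinearMap.toLinearMap_comp, hcomp]
    simp
  exact right_ne_zero_of_mul_eq_one hdet

theorem ContinuousLinearMap.exists_equiv_eq_prod_snd {𝕜 E F : Type*} [NontriviallyNormedField 𝕜]
    [NormedAddCommGroup E] [NormedSpace 𝕜 E] [NormedAddCommGroup F] [NormedSpace 𝕜 F]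
    (D : E × F →L[𝕜] E) (e : E ≃L[𝕜] E) (he : D.comp (inl 𝕜 E F) = e) :
    ∃ e' : (E × F) ≃L[𝕜] E × F, (e' : E × F →L[𝕜] E × F) = D.prod (snd 𝕜 E F) := by
  have hD : ∀ v s, D (v, s) = e v + D (0, s) := fun v s => by
    have hv : D (v, 0) = e v := DFunLike.congr_fun he v
    rw [← hv, ← map_add, Prod.mk_add_mk, add_zero, zero_add]
  refine ⟨.equivOfInverse (D.prod (snd 𝕜 E F))
    (((e.symm : E →L[𝕜] E).comp (fst 𝕜 E F - D.comp ((inr 𝕜 E F).comp (snd 𝕜 E F)))).prod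
      (snd 𝕜 E F)) ?_ ?_, rfl⟩
  · rintro ⟨v, s⟩
    simp [hD v s]
  · rintro ⟨y, s⟩
    have hy : D (e.symm (y - D (0, s)), s) = y := by
      rw [hD, ContinuousLinearEquiv.apply_symm_apply, sub_add_cancel]
    simpa [← map_sub] using hy

theorem ContDiff.eventually_exists_hasFDerivAt_equiv {𝕜 E F : Type*} [NontriviallyNormedField 𝕜]
    [NormedAddCommGroup E] [NormedSpace 𝕜 E] [CompleteSpace E] [NormedAddCommGroup F]
    [NormedSpace 𝕜 F] {f : E → F} {n : WithTop ℕ∞} (hf : ContDiff 𝕜 n f) (hn : n ≠ 0)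
    {a : E} {e : E ≃L[𝕜] F} (he : HasFDerivAt f (e : E →L[𝕜] F) a) :
    ∀ᶠ x in 𝓝 a, ∃ e' : E ≃L[𝕜] F, HasFDerivAt f (e' : E →L[𝕜] F) x := by
  have hinv := (hf.continuous_fderiv hn).continuousAt.preimage_mem_nhds
    (he.fderiv ▸ ContinuousLinearEquiv.nhds e)
  filter_upwards [hinv] with x ⟨e', he'⟩
  exact ⟨e', he' ▸ (hf.differentiable hn x).hasFDerivAt⟩

theorem ContDiff.exists_isOpen_slices_contDiffOn_inverse {𝕂 E F : Type*} [RCLike 𝕂]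
    [NormedAddCommGroup E] [NormedSpace 𝕂 E] [CompleteSpace E] [NormedAddCommGroup F]
    [NormedSpace 𝕂 F] [CompleteSpace F] {H : E × F → E} {n : WithTop ℕ∞}
    (hH : ContDiff 𝕂 n H) (hn : n ≠ 0) {w₀ : E × F} {D : E × F →L[𝕂] E} {e : E ≃L[𝕂] E}
    (hD : HasFDerivAt H D w₀) (he : D.comp (.inl 𝕂 E F) = e) :
    ∃ U : Set E, IsOpen U ∧ w₀.1 ∈ U ∧ ∀ᶠ ε in 𝓝 w₀.2,
      Set.InjOn (fun z => H (z, ε)) U ∧ IsOpen ((fun z => H (z, ε)) '' U) ∧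
      ∃ Hinv : E → E, ContDiffOn 𝕂 n Hinv ((fun z => H (z, ε)) '' U) ∧
        ∀ z ∈ U, Hinv (H (z, ε)) = z := by
  obtain ⟨e', he'⟩ := D.exists_equiv_eq_prod_snd e he
  have hΦ : ContDiff 𝕂 n fun w : E × F => (H w, w.2) := hH.prodMk contDiff_snd
  have hΦ' : HasFDerivAt (fun w : E × F => (H w, w.2)) (e' : E × F →L[𝕂] E × F) w₀ :=
    he' ▸ hD.prodMk hasFDerivAt_snd
  set Ψ := hΦ.contDiffAt.toOpenPartialHomeomorph _ hΦ' hn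
  -- Invertibility of the derivative on all of `U ×ˢ V` is what makes `Ψ.symm` smooth on each image.
  have hW : Ψ.source ∩ {w | ∃ e'' : (E × F) ≃L[𝕂] E × F,
      HasFDerivAt (fun w : E × F => (H w, w.2)) (e'' : E × F →L[𝕂] E × F) w} ∈ 𝓝 w₀ :=
    Filter.inter_mem (Ψ.open_source.mem_nhds (hΦ.contDiffAt.mem_toOpenPartialHomeomorph_source
      hΦ' hn)) (hΦ.eventually_exists_hasFDerivAt_equiv hn hΦ')
  obtain ⟨U, V, hU, hw₀U, hV, hw₀V, hUV⟩ := mem_nhds_prod_iff'.1 hW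
  refine ⟨U, hU, hw₀U, ?_⟩
  filter_upwards [hV.mem_nhds hw₀V] with ε hε
  have hsrc : ∀ z ∈ U, (z, ε) ∈ Ψ.source := fun z hz => (hUV ⟨hz, hε⟩).1
  have hΨ : ∀ w, Ψ w = (H w, w.2) := fun _ => rfl
  have hleft : ∀ z ∈ U, Ψ.symm (H (z, ε), ε) = (z, ε) := fun z hz => by
    rw [← hΨ, Ψ.left_inv (hsrc z hz)]
  refine ⟨fun a ha b hb hab => ?_, ?_, fun y => (Ψ.symm (y, ε)).1, ?_,
    fun z hz => congrArg Prod.fst (hleft z hz)⟩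
  · exact congrArg Prod.fst (Ψ.injOn (hsrc a ha) (hsrc b hb) (by simp only [hΨ, hab]))
  · have himage : (fun z => H (z, ε)) '' U = (fun y => (y, ε)) ⁻¹' (Ψ '' U ×ˢ V) := by
      ext y
      simp [hΨ, hε]
    rw [himage]
    exact (Ψ.isOpen_image_of_subset_source (hU.prod hV) fun w hw => (hUV hw).1).preimage
      (by fun_prop)
  · rintro _ ⟨z, hz, rfl⟩
    obtain ⟨e'', he''⟩ := (hUV (Set.mk_mem_prod hz hε)).2
    have hsymm : ContDiffAt 𝕂 n Ψ.symm (H (z, ε), ε) :=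
      Ψ.contDiffAt_symm (hΨ (z, ε) ▸ Ψ.map_source (hsrc z hz)) (hleft z hz ▸ he'')
        (hleft z hz ▸ hΦ.contDiffAt)
    have hslice : ContDiffAt 𝕂 n (fun y : E => (y, ε)) (H (z, ε)) := by fun_prop
    exact (contDiffAt_fst.comp _ (hsymm.comp (H (z, ε)) hslice)).contDiffWithinAt

theorem fast_slow_map_local_diffeo_iff_general (n p : ℕ)
    (N : (Fin n → ℝ) → Matrix (Fin n) (Fin p) ℝ)
    (f : (Fin n → ℝ) → (Fin p → ℝ))
    (G : (Fin n → ℝ) × ℝ → (Fin n → ℝ))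
    (hN : ∀ i j, ContDiff ℝ 1 (fun z => N z i j))
    (hf : ContDiff ℝ 1 f) (hG : ContDiff ℝ 1 G)
    (H : (Fin n → ℝ) × ℝ → (Fin n → ℝ))
    (hH : ∀ z ε, H (z, ε) = z + (N z).mulVec (f z) + ε • G (z, ε))
    (z₀ : Fin n → ℝ) (hz₀ : f z₀ = 0)
    (Df : Matrix (Fin p) (Fin n) ℝ)
    (hDf : ∀ i j, Df i j = fderiv ℝ f z₀ (Pi.single j 1) i) :
    ((1 : Matrix (Fin p) (Fin p) ℝ) + Df * N z₀).det ≠ 0 ↔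
      ∃ U : Set (Fin n → ℝ), IsOpen U ∧ z₀ ∈ U ∧
        ∃ ε₀ > (0 : ℝ), ∀ ε ∈ Set.Ico (0 : ℝ) ε₀,
          Set.InjOn (fun z => H (z, ε)) U ∧
          IsOpen ((fun z => H (z, ε)) '' U) ∧
          ContDiffOn ℝ 1 (fun z => H (z, ε)) U ∧
          ∃ Hinv : (Fin n → ℝ) → (Fin n → ℝ),
            ContDiffOn ℝ 1 Hinv ((fun z => H (z, ε)) '' U) ∧
            ∀ z ∈ U, Hinv (H (z, ε)) = z := by
  set A : (Fin n → ℝ) →L[ℝ] Fin n → ℝ := .id ℝ _ +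
    (Matrix.toLin' (N z₀)).toContinuousLinearMap.comp (fderiv ℝ f z₀)
  have hDf' : Df = LinearMap.toMatrix' (fderiv ℝ f z₀ : (Fin n → ℝ) →ₗ[ℝ] Fin p → ℝ) :=
    Matrix.ext fun i j => by rw [hDf, LinearMap.toMatrix'_apply]; rfl
  have hdet : A.det = (1 + Df * N z₀).det := hDf' ▸ ContinuousLinearMap.det_id_add_toLin'_comp _ _
  have hfast : HasFDerivAt (fun z => z + (N z).mulVec (f z)) A z₀ :=
    (hasFDerivAt_id z₀).add <| (hf.differentiable one_ne_zero z₀).hasFDerivAt.mulVec_of_eq_zero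
      (fun i j => (hN i j).differentiable one_ne_zero z₀) hz₀
  have hH' : H = fun w => w.1 + (N w.1).mulVec (f w.1) + w.2 • G w := funext fun w => hH w.1 w.2
  have hHC : ContDiff ℝ 1 H := hH' ▸
    ((contDiff_id.add (ContDiff.mulVec hN hf)).comp contDiff_fst).add (contDiff_snd.smul hG)
  constructor
  · intro hne
    have hD := ((hfast.comp (z₀, 0) hasFDerivAt_fst).add (hasFDerivAt_snd.smul
      (hG.differentiable one_ne_zero (z₀, 0)).hasFDerivAt)).congr_of_eventuallyEq
      (.of_forall fun w => hH w.1 w.2)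
    obtain ⟨U, hU, hz₀U, hslices⟩ := hHC.exists_isOpen_slices_contDiffOn_inverse one_ne_zero hD
      (e := A.toContinuousLinearEquivOfDetNeZero (hdet ▸ hne)) (by ext v; simp)
    obtain ⟨ε₀, hε₀, hIco⟩ := exists_Ico_subset_of_mem_nhds hslices ⟨1, one_pos⟩
    refine ⟨U, hU, hz₀U, ε₀, hε₀, fun ε hε => ?_⟩
    obtain ⟨hinj, hopen, Hinv, hHinv, hinv⟩ := hIco hε
    exact ⟨hinj, hopen, (hHC.comp (by fun_prop)).contDiffOn, Hinv, hHinv, hinv⟩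
  · rintro ⟨U, hU, hz₀U, ε₀, hε₀, hslices⟩
    obtain ⟨-, hopen, -, Hinv, hHinv, hinv⟩ := hslices 0 ⟨le_rfl, hε₀⟩
    have hH₀ : (fun z => H (z, 0)) = fun z => z + (N z).mulVec (f z) := by simp [hH]
    rw [← hdet]
    exact (hH₀ ▸ hfast).det_ne_zero_of_eventually_leftInverse
      ((hHinv.contDiffAt (hopen.mem_nhds ⟨z₀, hz₀U, rfl⟩)).differentiableAt one_ne_zero)
      (Filter.eventually_of_mem (hU.mem_nhds hz₀U) hinv)

/-- Invertibility proposition for fast-slow maps: the map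
`H(z,ε) = z + N(z)·f(z) + ε·G(z,ε)` restricted to a neighbourhood of a point
`z₀` of the critical manifold `{f = 0}` is a `C¹` diffeomorphism onto an open
set, uniformly for all sufficiently small `ε ≥ 0`, if and only if
`det (I_p + Df(z₀)·N(z₀)) ≠ 0`, i.e. no nontrivial multiplier vanishes.
(Smoothness of the matrix-valued map `N` is expressed entrywise.) -/
theorem fast_slow_map_local_diffeo_iff (n p : ℕ) (hp : 1 ≤ p)
    (N : (Fin n → ℝ) → Matrix (Fin n) (Fin p) ℝ)
    (f : (Fin n → ℝ) → (Fin p → ℝ))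
    (G : (Fin n → ℝ) × ℝ → (Fin n → ℝ))
    (hN : ∀ i j, ContDiff ℝ 1 (fun z => N z i j))
    (hf : ContDiff ℝ 1 f) (hG : ContDiff ℝ 1 G)
    (H : (Fin n → ℝ) × ℝ → (Fin n → ℝ))
    (hH : ∀ z ε, H (z, ε) = z + (N z).mulVec (f z) + ε • G (z, ε))
    (z₀ : Fin n → ℝ) (hz₀ : f z₀ = 0)
    (Df : Matrix (Fin p) (Fin n) ℝ)
    (hDf : ∀ i j, Df i j = fderiv ℝ f z₀ (Pi.single j 1) i) :
    ((1 : Matrix (Fin p) (Fin p) ℝ) + Df * N z₀).det ≠ 0 ↔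
      ∃ U : Set (Fin n → ℝ), IsOpen U ∧ z₀ ∈ U ∧
        ∃ ε₀ > (0 : ℝ), ∀ ε ∈ Set.Ico (0 : ℝ) ε₀,
          Set.InjOn (fun z => H (z, ε)) U ∧
          IsOpen ((fun z => H (z, ε)) '' U) ∧
          ContDiffOn ℝ 1 (fun z => H (z, ε)) U ∧
          ∃ Hinv : (Fin n → ℝ) → (Fin n → ℝ),
            ContDiffOn ℝ 1 Hinv ((fun z => H (z, ε)) '' U) ∧
            ∀ z ∈ U, Hinv (H (z, ε)) = z :=
  fast_slow_map_local_diffeo_iff_general n p N f G hN hf hG H hH z₀ hz₀ Df hDf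
end

section
/- Let n ≥ 1 and let B be an n×n real matrix, with complex spectrum understood via the entrywise embedding ℝ → ℂ. Then the following are equivalent: (i) every eigenvalue λ ∈ spectrum ℂ B satisfies Re λ ≠ 0; (ii) there exist constants c > 0 and ε₀ > 0 such that for every ε with 0 < ε < ε₀, every eigenvalue μ ∈ spectrum ℂ (I_n + ε • B) satisfies | |μ| − 1 | > c·ε. -/
/-!
The multipliers of `I + ε • B` are the points `1 + ε λ`, `λ` an eigenvalue of `B`, and
`‖1 + ε λ‖² = 1 + 2 ε Re λ + ε² ‖λ‖²`. If every `Re λ` is nonzero, the linear term dominates for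
small `ε` and pushes every multiplier a distance of order `ε` off the unit circle. If some `Re λ`
vanishes, the corresponding multiplier is only `O(ε²)` away from it, which defeats any bound `c ε`.
-/

open Complex

theorem spectrum_one_add_smul {𝕜 A : Type*} [Field 𝕜] [Ring A] [Algebra 𝕜 A] (a : A) {t : 𝕜}
    (ht : t ≠ 0) : spectrum 𝕜 (1 + t • a) = (fun z => 1 + t * z) '' spectrum 𝕜 a := by
  have h : (1 : A) + t • a = algebraMap 𝕜 A 1 + (Units.mk0 t ht) • a := by simp
  rw [h, ← spectrum.singleton_add_eq, spectrum.unit_smul_eq_smul, Set.singleton_add,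
    ← Set.image_smul, Set.image_image]
  rfl

theorem Set.Finite.exists_pos_forall_le {α : Type*} {s : Set α} (hs : s.Finite) {f : α → ℝ}
    (hf : ∀ x ∈ s, 0 < f x) : ∃ a > 0, ∀ x ∈ s, a ≤ f x := by
  rcases s.eq_empty_or_nonempty with rfl | hne
  · exact ⟨1, one_pos, by simp⟩
  · obtain ⟨x₀, hx₀, hmin⟩ := s.exists_min_image f hs hne
    exact ⟨f x₀, hf x₀ hx₀, hmin⟩

namespace Complex

theorem norm_one_add_ofReal_mul_sq (ε : ℝ) (z : ℂ) :
    ‖1 + ε * z‖ ^ 2 = 1 + 2 * ε * z.re + ε ^ 2 * ‖z‖ ^ 2 := by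
  simp only [← normSq_eq_norm_sq, normSq_apply, add_re, add_im, mul_re, mul_im, ofReal_re,
    ofReal_im, one_re, one_im]
  ring

theorem mul_sub_le_three_mul_abs_norm_one_add_mul_sub_one {ε : ℝ} {z : ℂ} (hε : 0 ≤ ε)
    (hεz : ε * ‖z‖ ≤ 1) :
    ε * (2 * |z.re| - ε * ‖z‖ ^ 2) ≤ 3 * |‖1 + ε * z‖ - 1| := by
  set s := ‖1 + ε * z‖
  have hs : s ≤ 2 := calc
    s ≤ ‖(1 : ℂ)‖ + ‖(ε : ℂ) * z‖ := norm_add_le _ _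
    _ = 1 + ε * ‖z‖ := by rw [norm_one, norm_mul, norm_real, Real.norm_of_nonneg hε]
    _ ≤ 2 := by linarith
  calc ε * (2 * |z.re| - ε * ‖z‖ ^ 2) = |2 * ε * z.re| - |ε ^ 2 * ‖z‖ ^ 2| := by
        rw [abs_mul (2 * ε), abs_of_nonneg (by positivity : 0 ≤ 2 * ε),
          abs_of_nonneg (by positivity : 0 ≤ ε ^ 2 * ‖z‖ ^ 2)]
        ring
    _ ≤ |2 * ε * z.re + ε ^ 2 * ‖z‖ ^ 2| := abs_sub_abs_le_abs_add _ _
    _ = |s - 1| * (s + 1) := by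
        rw [← abs_of_nonneg (by positivity : 0 ≤ s + 1), ← abs_mul]
        congr 1
        linear_combination -norm_one_add_ofReal_mul_sq ε z
    _ ≤ 3 * |s - 1| := by nlinarith [abs_nonneg (s - 1)]

theorem mul_lt_abs_norm_one_add_mul_sub_one {a R ε : ℝ} {z : ℂ} (hR : 0 < R) (hε : 0 < ε)
    (hεR : ε < min (1 / R) (a / R ^ 2)) (ha : a ≤ |z.re|) (hz : ‖z‖ ≤ R) :
    a / 3 * ε < |‖1 + ε * z‖ - 1| := by
  obtain ⟨hε₁, hε₂⟩ := lt_min_iff.1 hεR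
  have hεz : ε * ‖z‖ ≤ 1 := calc
    ε * ‖z‖ ≤ ε * R := by gcongr
    _ ≤ 1 := ((lt_div_iff₀ hR).1 (by simpa using hε₁)).le
  have hεz2 : ε * ‖z‖ ^ 2 < a := calc
    ε * ‖z‖ ^ 2 ≤ ε * R ^ 2 := by gcongr
    _ < a := (lt_div_iff₀ (by positivity)).1 hε₂
  nlinarith [mul_sub_le_three_mul_abs_norm_one_add_mul_sub_one hε.le hεz]

theorem abs_norm_one_add_mul_sub_one_le_of_re_eq_zero (ε : ℝ) {z : ℂ} (hz : z.re = 0) :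
    |‖1 + ε * z‖ - 1| ≤ ε ^ 2 * ‖z‖ ^ 2 := by
  have hsq := norm_one_add_ofReal_mul_sq ε z
  rw [hz, mul_zero, add_zero] at hsq
  have hs : 1 ≤ ‖1 + ε * z‖ := by nlinarith [norm_nonneg (1 + ε * z), sq_nonneg (ε * ‖z‖)]
  rw [abs_of_nonneg (by linarith)]
  nlinarith

theorem exists_abs_norm_one_add_mul_sub_one_le_of_re_eq_zero {c ε₀ : ℝ} (hc : 0 < c)
    (hε₀ : 0 < ε₀) {z : ℂ} (hz : z.re = 0) :
    ∃ ε : ℝ, 0 < ε ∧ ε < ε₀ ∧ |‖1 + ε * z‖ - 1| ≤ c * ε := by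
  obtain ⟨δ, hδ, hδz⟩ := exists_pos_mul_lt hc (‖z‖ ^ 2)
  set ε := min δ (ε₀ / 2)
  refine ⟨ε, lt_min hδ (half_pos hε₀), (min_le_right _ _).trans_lt (half_lt_self hε₀), ?_⟩
  have hεz : ε * ‖z‖ ^ 2 ≤ c := calc
    ε * ‖z‖ ^ 2 ≤ δ * ‖z‖ ^ 2 := by gcongr; exact min_le_left δ (ε₀ / 2)
    _ ≤ c := by linarith
  calc |‖1 + ε * z‖ - 1| ≤ ε ^ 2 * ‖z‖ ^ 2 := abs_norm_one_add_mul_sub_one_le_of_re_eq_zero ε hz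
    _ = ε * (ε * ‖z‖ ^ 2) := by ring
    _ ≤ ε * c := by gcongr
    _ = c * ε := mul_comm ε c

end Complex

theorem hyperbolicity_iff_multipliers_off_unit_circle_general (n : ℕ)
    (B : Matrix (Fin n) (Fin n) ℝ) :
    (∀ lam ∈ spectrum ℂ (B.map Complex.ofReal), lam.re ≠ 0) ↔
      ∃ c > (0 : ℝ), ∃ ε₀ > (0 : ℝ), ∀ ε : ℝ, 0 < ε → ε < ε₀ →
        ∀ μ ∈ spectrum ℂ
            (((1 : Matrix (Fin n) (Fin n) ℝ) + ε • B).map Complex.ofReal),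
          c * ε < |‖μ‖ - 1| := by
  set A := B.map ofReal
  have hspec (ε : ℝ) (hε : 0 < ε) :
      spectrum ℂ (((1 : Matrix (Fin n) (Fin n) ℝ) + ε • B).map ofReal) =
        (fun z => 1 + (ε : ℂ) * z) '' spectrum ℂ A := by
    rw [← spectrum_one_add_smul A (ofReal_ne_zero.2 hε.ne')]
    simp [A, Matrix.map_add, Matrix.map_smul]
  constructor
  · intro hre
    obtain ⟨a, ha, hle⟩ := (Matrix.finite_spectrum A).exists_pos_forall_le
      (f := fun z => |z.re|) fun z hz => abs_pos.2 (hre z hz)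
    obtain ⟨R, hR, hbound⟩ := (Matrix.finite_spectrum A).isBounded.exists_pos_norm_le
    refine ⟨a / 3, by positivity, min (1 / R) (a / R ^ 2), by positivity, ?_⟩
    intro ε hε hεlt
    rw [hspec ε hε]
    rintro _ ⟨z, hz, rfl⟩
    exact mul_lt_abs_norm_one_add_mul_sub_one hR hε hεlt (hle z hz) (hbound z hz)
  · rintro ⟨c, hc, ε₀, hε₀, H⟩ z hz hre
    obtain ⟨ε, hε, hεlt, hle⟩ := exists_abs_norm_one_add_mul_sub_one_le_of_re_eq_zero hc hε₀ hre
    refine (H ε hε hεlt _ ?_).not_ge hle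
    rw [hspec ε hε]
    exact ⟨z, hz, rfl⟩

/-- Quantitative hyperbolicity: all complex eigenvalues of the real matrix `B`
have nonzero real part if and only if there are `c > 0` and `ε₀ > 0` such that
for all `0 < ε < ε₀` every eigenvalue `μ` of `I + ε • B` satisfies
`| |μ| − 1 | > c·ε`. -/
theorem hyperbolicity_iff_multipliers_off_unit_circle (n : ℕ) (hn : 1 ≤ n)
    (B : Matrix (Fin n) (Fin n) ℝ) :
    (∀ lam ∈ spectrum ℂ (B.map Complex.ofReal), lam.re ≠ 0) ↔
      ∃ c > (0 : ℝ), ∃ ε₀ > (0 : ℝ), ∀ ε : ℝ, 0 < ε → ε < ε₀ →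
        ∀ μ ∈ spectrum ℂ
            (((1 : Matrix (Fin n) (Fin n) ℝ) + ε • B).map Complex.ofReal),
          c * ε < |‖μ‖ - 1| :=
  hyperbolicity_iff_multipliers_off_unit_circle_general n B
end

section
/- Let k ∈ ℕ and a ∈ ℝᵏ. For every quadratic form Q on ℝᵏ × ℝ there exists a unique quadratic form F on ℝᵏ × ℝ such that ∫₀¹ F(x + (τ·u)·a, u) dτ = Q(x, u) for all x ∈ ℝᵏ and u ∈ ℝ. Moreover, if Q(x, 0) = 0 for all x ∈ ℝᵏ, then F(x, 0) = 0 for all x ∈ ℝᵏ, and for every x ∈ ℝᵏ the polar forms agree: polar F ((x,0), (0,1)) = polar Q ((x,0), (0,1)). -/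
/-!
Write `S_c (x, u) = (x + (c u) a, u)` for the shear along `a`. Expanding `τ ↦ F (S_τ p)` as a
polynomial of degree two in `τ` and integrating over `[0, 1]` gives
`∫₀¹ F (S_τ p) dτ = F (S_{1/2} p) + u² F (a, 0) / 12`. The right-hand side is an invertible
affine expression in `F`: evaluating at `u = 0` recovers `F (a, 0) = Q (a, 0)`, and then
`F = Q ∘ S_{-1/2} - (Q (a, 0) / 12) u²`. When `Q` vanishes on `u = 0` the correction term
disappears, and since `S_{-1/2}` fixes `(x, 0)` and moves `(0, 1)` only along `(a, 0)`, on which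
the polar form of `Q` vanishes, the polar forms agree.
-/

open scoped intervalIntegral

theorem QuadraticMap.map_add_smul {R M N : Type*} [CommRing R] [AddCommGroup M] [Module R M]
    [AddCommGroup N] [Module R N] (Q : QuadraticMap R M N) (x y : M) (c : R) :
    Q (x + c • y) = Q x + c • polar Q x y + (c * c) • Q y := by
  rw [QuadraticMap.map_add (⇑Q) x (c • y), polar_smul_right, QuadraticMap.map_smul]
  abel

theorem QuadraticMap.polar_comp_linearMap {R M M' N : Type*} [CommRing R] [AddCommGroup M]
    [Module R M] [AddCommGroup M'] [Module R M'] [AddCommGroup N] [Module R N]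
    (Q : QuadraticMap R M' N) (f : M →ₗ[R] M') (x y : M) :
    polar (Q.comp f) x y = polar Q (f x) (f y) := by
  simp only [polar, comp_apply, map_add]

theorem integral_zero_one_quadratic (p q r : ℝ) :
    ∫ τ in (0:ℝ)..1, (p + q * τ + r * τ ^ 2) = p + q / 2 + r / 3 := by
  have hint : ∀ f : ℝ → ℝ, Continuous f → IntervalIntegrable f MeasureTheory.volume 0 1 :=
    fun f hf => hf.intervalIntegrable 0 1
  rw [intervalIntegral.integral_add (hint _ (by fun_prop)) (hint _ (by fun_prop)),
    intervalIntegral.integral_add (hint _ (by fun_prop)) (hint _ (by fun_prop)),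
    intervalIntegral.integral_const_mul, intervalIntegral.integral_const_mul]
  simp only [intervalIntegral.integral_const, integral_id, integral_pow]
  norm_num
  ring

variable {E : Type*} [AddCommGroup E] [Module ℝ E]

noncomputable def shear (a : E) (c : ℝ) : E × ℝ →ₗ[ℝ] E × ℝ :=
  (LinearMap.fst ℝ E ℝ + c • (LinearMap.snd ℝ E ℝ).smulRight a).prod (LinearMap.snd ℝ E ℝ)

@[simp]
theorem shear_apply (a x : E) (c u : ℝ) : shear a c (x, u) = (x + (c * u) • a, u) := by
  simp [shear, smul_smul]

theorem integral_quadraticForm_shear (F : QuadraticForm ℝ (E × ℝ)) (a x : E) (u : ℝ) :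
    ∫ τ in (0:ℝ)..1, F (x + (τ * u) • a, u) = F (x + (u / 2) • a, u) + u ^ 2 / 12 * F (a, 0) := by
  have hexpand : ∀ c : ℝ, F (x + c • a, u) =
      F (x, u) + c * QuadraticMap.polar F (x, u) (a, 0) + c * c * F (a, 0) := by
    intro c
    simpa using F.map_add_smul (x, u) (a, 0) c
  simp_rw [hexpand]
  calc ∫ τ in (0:ℝ)..1, (F (x, u) + τ * u * QuadraticMap.polar F (x, u) (a, 0)
          + τ * u * (τ * u) * F (a, 0))
      = ∫ τ in (0:ℝ)..1, (F (x, u) + u * QuadraticMap.polar F (x, u) (a, 0) * τ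
          + u ^ 2 * F (a, 0) * τ ^ 2) := by
        congr 1; ext τ; ring
    _ = _ := by rw [integral_zero_one_quadratic]; ring

noncomputable def matchingForm (a : E) (Q : QuadraticForm ℝ (E × ℝ)) :
    QuadraticForm ℝ (E × ℝ) :=
  Q.comp (shear a (-1 / 2)) - (Q (a, 0) / 12) • QuadraticMap.sq.comp (LinearMap.snd ℝ E ℝ)

theorem matchingForm_apply (a : E) (Q : QuadraticForm ℝ (E × ℝ)) (x : E) (u : ℝ) :
    matchingForm a Q (x, u) = Q (x - (u / 2) • a, u) - Q (a, 0) / 12 * u ^ 2 := by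
  simp only [matchingForm, sub_apply, QuadraticMap.comp_apply, shear_apply,
    smul_apply, QuadraticMap.sq_apply, LinearMap.snd_apply, smul_eq_mul]
  rw [show (-1 / 2 : ℝ) * u = -(u / 2) by ring, neg_smul, ← sub_eq_add_neg]
  ring

theorem matchingForm_apply_inl (a : E) (Q : QuadraticForm ℝ (E × ℝ)) (x : E) :
    matchingForm a Q (x, 0) = Q (x, 0) := by
  simp [matchingForm_apply]

theorem integral_quadraticForm_shear_eq_iff (a : E) (F Q : QuadraticForm ℝ (E × ℝ)) :
    (∀ (x : E) (u : ℝ), ∫ τ in (0:ℝ)..1, F (x + (τ * u) • a, u) = Q (x, u)) ↔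
      F = matchingForm a Q := by
  simp only [integral_quadraticForm_shear]
  constructor
  · intro h
    have hFa : F (a, 0) = Q (a, 0) := by simpa using h a 0
    ext ⟨x, u⟩
    rw [matchingForm_apply, ← h, sub_add_cancel, hFa]
    ring
  · rintro rfl x u
    rw [matchingForm_apply, matchingForm_apply_inl, add_sub_cancel_right]
    ring

theorem polar_matchingForm_inl_inr (a : E) (Q : QuadraticForm ℝ (E × ℝ))
    (hQ : ∀ x : E, Q (x, 0) = 0) (x : E) :
    QuadraticMap.polar (matchingForm a Q) (x, 0) (0, 1) = QuadraticMap.polar Q (x, 0) (0, 1) := by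
  have hpolar : QuadraticMap.polar Q (x, 0) (a, 0) = 0 := by
    simp [QuadraticMap.polar, hQ]
  have hshear : shear a (-1 / 2) (0, 1) = (0, 1) + (-1 / 2 : ℝ) • ((a, 0) : E × ℝ) := by
    simp
  have hshear_inl : shear a (-1 / 2) (x, 0) = (x, 0) := by
    simp
  rw [matchingForm, hQ a, zero_div, zero_smul, sub_zero, QuadraticMap.polar_comp_linearMap,
    hshear, hshear_inl, QuadraticMap.polar_add_right, QuadraticMap.polar_smul_right, hpolar,
    smul_zero, add_zero]

open scoped intervalIntegral in
/-- Quadratic-order matching: for every quadratic form `Q` on `ℝᵏ × ℝ` there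
is a unique quadratic form `F` with `∫₀¹ F(x + (τ·u)·a, u) dτ = Q(x,u)`;
moreover if `Q(x,0) = 0` for all `x` then `F(x,0) = 0` for all `x` and the
polar forms `polar F ((x,0),(0,1))` and `polar Q ((x,0),(0,1))` agree. -/
theorem quadratic_matching (k : ℕ) (a : Fin k → ℝ)
    (Q : QuadraticForm ℝ ((Fin k → ℝ) × ℝ)) :
    (∃! F : QuadraticForm ℝ ((Fin k → ℝ) × ℝ),
      ∀ (x : Fin k → ℝ) (u : ℝ),
        (∫ τ in (0:ℝ)..1, F (x + (τ * u) • a, u)) = Q (x, u)) ∧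
    (∀ F : QuadraticForm ℝ ((Fin k → ℝ) × ℝ),
      (∀ (x : Fin k → ℝ) (u : ℝ),
          (∫ τ in (0:ℝ)..1, F (x + (τ * u) • a, u)) = Q (x, u)) →
      (∀ x : Fin k → ℝ, Q (x, 0) = 0) →
      (∀ x : Fin k → ℝ, F (x, 0) = 0) ∧
      ∀ x : Fin k → ℝ,
        QuadraticMap.polar (⇑F) (x, 0) (0, 1) =
          QuadraticMap.polar (⇑Q) (x, 0) (0, 1)) := by
  refine ⟨⟨matchingForm a Q, (integral_quadraticForm_shear_eq_iff a _ Q).2 rfl,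
    fun F hF => (integral_quadraticForm_shear_eq_iff a F Q).1 hF⟩, ?_⟩
  intro F hF hQ
  obtain rfl := (integral_quadraticForm_shear_eq_iff a F Q).1 hF
  exact ⟨fun x => (matchingForm_apply_inl a Q x).trans (hQ x), polar_matchingForm_inl_inr a Q hQ⟩
end
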